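/- arXiv:1407.3851 — 2 statements merged into one kernel-verified Lean document; each statement's English description precedes it below -/
import Mathlib

section
/- Let Λ be a standard Borel space, Q : Λ → ℝ^m Borel measurable, P_𝒟 a probability measure on ℝ^m, and q ↦ ν_q a Markov kernel from ℝ^m to Λ with ν_q(Q⁻¹({q})) = 1 for P_𝒟-almost every q. Then P(A) := ∫_{ℝ^m} ν_q(A) dP_𝒟(q) defines a probability measure on the Borel σ-algebra of Λ whose pushforward under Q equals P_𝒟. Moreover P is the unique probability measure on Λ with pushforward P_𝒟 whose disintegration kernel along Q agrees with ν_q for P_𝒟-almost every q. -/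
open MeasureTheory ProbabilityTheory
open scoped ENNReal

/-!
Take `P := ν ∘ₘ P𝒟`. Pushing each `ν q` forward along `Q` gives a probability measure with an
atom of mass one at `q`, i.e. `dirac q`, for `P𝒟`-a.e. `q`; hence `P.map Q = Kernel.id ∘ₘ P𝒟 = P𝒟`.
Any `P'` disintegrated by `κ` over `P'.map Q = P𝒟` is `κ ∘ₘ P𝒟`, and `κ = ν` a.e. gives `P' = P`.
-/

namespace MeasureTheory.Measure

variable {α β : Type*} [MeasurableSpace α] [MeasurableSpace β]

lemma eq_dirac_of_apply_singleton_eq_one [MeasurableSingletonClass α] {μ : Measure α}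
    [IsProbabilityMeasure μ] {a : α} (h : μ {a} = 1) : μ = dirac a := by
  have hae : ∀ᵐ x ∂μ, x ∈ ({a} : Set α) :=
    (mem_ae_iff_prob_eq_one (measurableSet_singleton a)).2 h
  rw [← restrict_eq_self_of_ae_mem hae, restrict_singleton, h, one_smul]

lemma map_comp_eq_self_of_ae_apply_preimage_singleton_eq_one [MeasurableSingletonClass β]
    {μ : Measure β} {κ : Kernel β α} [IsMarkovKernel κ] {f : α → β} (hf : Measurable f)
    (h : ∀ᵐ b ∂μ, κ b (f ⁻¹' {b}) = 1) : (κ ∘ₘ μ).map f = μ := by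
  rw [map_comp μ κ hf]
  conv_rhs => rw [← id_comp (μ := μ)]
  refine comp_congr ?_
  filter_upwards [h] with b hb
  have : IsProbabilityMeasure ((κ b).map f) := isProbabilityMeasure_map hf.aemeasurable
  rw [Kernel.map_apply κ hf, Kernel.id_apply]
  exact eq_dirac_of_apply_singleton_eq_one (by rwa [map_apply hf (measurableSet_singleton b)])

lemma eq_comp_of_forall_apply_eq_lintegral {μ : Measure β} {ν : Measure α} {κ : Kernel β α}
    (h : ∀ s, MeasurableSet s → ν s = ∫⁻ b, κ b s ∂μ) : ν = κ ∘ₘ μ := by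
  ext s hs
  rw [h s hs, bind_apply hs κ.aemeasurable]

end MeasureTheory.Measure

open Measure in
theorem stmt_5_general {Λ : Type*} [MeasurableSpace Λ] {m : ℕ}
    (Q : Λ → (Fin m → ℝ)) (hQ : Measurable Q)
    (P𝒟 : Measure (Fin m → ℝ)) [IsProbabilityMeasure P𝒟]
    (ν : Kernel (Fin m → ℝ) Λ) [IsMarkovKernel ν]
    (hν : ∀ᵐ q ∂P𝒟, ν q (Q ⁻¹' {q}) = 1) :
    ∃ P : Measure Λ, IsProbabilityMeasure P ∧
      (∀ A : Set Λ, MeasurableSet A → P A = ∫⁻ q, ν q A ∂P𝒟) ∧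
      P.map Q = P𝒟 ∧
      (∀ P' : Measure Λ, IsProbabilityMeasure P' → P'.map Q = P𝒟 →
        ∀ κ : Kernel (Fin m → ℝ) Λ, IsMarkovKernel κ →
          (∀ A : Set Λ, MeasurableSet A → P' A = ∫⁻ q, κ q A ∂(P'.map Q)) →
          (∀ᵐ q ∂(P'.map Q), κ q (Q ⁻¹' {q}) = 1) →
          (∀ᵐ q ∂P𝒟, κ q = ν q) → P' = P) := by
  refine ⟨ν ∘ₘ P𝒟, inferInstance, fun A hA => bind_apply hA ν.aemeasurable,
    map_comp_eq_self_of_ae_apply_preimage_singleton_eq_one hQ hν, ?_⟩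
  intro P' _ hP'Q κ _ hP'κ _ hκν
  rw [eq_comp_of_forall_apply_eq_lintegral hP'κ, hP'Q, comp_congr hκν]

/-- Under the Ansatz (a Markov kernel `ν` concentrated on the generalized contours
`Q⁻¹({q})` for `P_𝒟`-a.e. `q`), `P(A) := ∫ ν_q(A) dP_𝒟(q)` defines a probability measure
on `Λ` whose pushforward under `Q` is `P_𝒟`, and `P` is the unique probability measure
with pushforward `P_𝒟` whose disintegration kernel along `Q` agrees with `ν` a.e. -/
theorem stmt_5 {Λ : Type*} [MeasurableSpace Λ] [StandardBorelSpace Λ] {m : ℕ}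
    (Q : Λ → (Fin m → ℝ)) (hQ : Measurable Q)
    (P𝒟 : Measure (Fin m → ℝ)) [IsProbabilityMeasure P𝒟]
    (ν : Kernel (Fin m → ℝ) Λ) [IsMarkovKernel ν]
    (hν : ∀ᵐ q ∂P𝒟, ν q (Q ⁻¹' {q}) = 1) :
    ∃ P : Measure Λ, IsProbabilityMeasure P ∧
      (∀ A : Set Λ, MeasurableSet A → P A = ∫⁻ q, ν q A ∂P𝒟) ∧
      P.map Q = P𝒟 ∧
      (∀ P' : Measure Λ, IsProbabilityMeasure P' → P'.map Q = P𝒟 →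
        ∀ κ : Kernel (Fin m → ℝ) Λ, IsMarkovKernel κ →
          (∀ A : Set Λ, MeasurableSet A → P' A = ∫⁻ q, κ q A ∂(P'.map Q)) →
          (∀ᵐ q ∂(P'.map Q), κ q (Q ⁻¹' {q}) = 1) →
          (∀ᵐ q ∂P𝒟, κ q = ν q) → P' = P) :=
  stmt_5_general Q hQ P𝒟 ν hν
end

section
/- Let Λ ⊆ ℝ^n be a compact set such that every nonempty relatively open subset of Λ has positive Lebesgue measure, and let X_1, X_2, … be i.i.d. random points in Λ whose common law has a Lebesgue-almost everywhere positive density on Λ. Let A ⊆ Λ be a Borel set whose topological boundary (relative to Λ) has Lebesgue measure zero. For each N, let A_N be the Voronoi coverage of A by the cells generated by X_1, …, X_N. Then almost surely the Lebesgue measure of the symmetric difference A_N △ A tends to 0 as N → ∞. -/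
/-!
Almost surely the samples all lie in `Λ` and are dense in `Λ`: every open set meeting `Λ` has
positive mass under the sampling law, so by independence it is missed by the first `N` samples
with probability decaying geometrically in `N`, and a countable basis of the topology takes care
of all open sets at once. For dense samples, a point `x` of `Λ` off the relative boundary of `A`
has a ball around it lying in `A` or missing `A`; once some sample falls in that ball, the center
of every Voronoi cell containing `x` does too, so eventually `x ∈ A_N ↔ x ∈ A`. The boundary is
null, so dominated convergence on the compact `Λ` gives `volume (A_N ∆ A) → 0`.
-/

open MeasureTheory ProbabilityTheory Filter
open scoped ENNReal symmDiff

/-- The Voronoi cell of the sample point `pts j` within `Λ`. -/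
def voronoiCell {n N : ℕ} (Λ : Set (Fin n → ℝ)) (pts : Fin N → (Fin n → ℝ))
    (j : Fin N) : Set (Fin n → ℝ) :=
  {x ∈ Λ | ∀ i, dist x (pts j) ≤ dist x (pts i)}

/-- The Voronoi coverage of a set `A`: the union of the Voronoi cells whose centers lie
in `A`. -/
def voronoiCoverage {n N : ℕ} (Λ : Set (Fin n → ℝ)) (pts : Fin N → (Fin n → ℝ))
    (A : Set (Fin n → ℝ)) : Set (Fin n → ℝ) :=
  ⋃ (j : Fin N) (_ : pts j ∈ A), voronoiCell Λ pts j

section Voronoi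

variable {n N : ℕ} {Λ A : Set (Fin n → ℝ)} {x : Fin n → ℝ}

lemma voronoiCoverage_subset (pts : Fin N → (Fin n → ℝ)) (A : Set (Fin n → ℝ)) :
    voronoiCoverage Λ pts A ⊆ Λ :=
  Set.iUnion₂_subset fun _ _ _ hx => hx.1

lemma measurableSet_voronoiCell (hΛ : MeasurableSet Λ) (pts : Fin N → (Fin n → ℝ))
    (j : Fin N) : MeasurableSet (voronoiCell Λ pts j) := by
  refine hΛ.inter (?_ : MeasurableSet {x | ∀ i, dist x (pts j) ≤ dist x (pts i)})
  simp only [Set.ofPred_forall]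
  exact .iInter fun i => measurableSet_le (by fun_prop) (by fun_prop)

lemma measurableSet_voronoiCoverage (hΛ : MeasurableSet Λ) (pts : Fin N → (Fin n → ℝ))
    (A : Set (Fin n → ℝ)) : MeasurableSet (voronoiCoverage Λ pts A) :=
  MeasurableSet.iUnion fun j => MeasurableSet.iUnion fun _ => measurableSet_voronoiCell hΛ pts j

lemma exists_mem_voronoiCell [NeZero N] (pts : Fin N → (Fin n → ℝ)) (hx : x ∈ Λ) :
    ∃ j, x ∈ voronoiCell Λ pts j := by
  obtain ⟨j, -, hj⟩ := Finset.exists_min_image Finset.univ (fun j => dist x (pts j))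
    Finset.univ_nonempty
  exact ⟨j, hx, fun i => hj i (Finset.mem_univ i)⟩

variable {pts : ℕ → Fin n → ℝ}

lemma eventually_forall_dist_lt_of_mem_voronoiCell (hx : x ∈ closure (Set.range pts))
    {ε : ℝ} (hε : 0 < ε) :
    ∀ᶠ N in atTop, ∀ j : Fin N,
      x ∈ voronoiCell Λ (fun i : Fin N => pts i) j → dist x (pts j) < ε := by
  obtain ⟨k, hk⟩ := Metric.mem_closure_range_iff.1 hx ε hε
  filter_upwards [eventually_gt_atTop k] with N hN j hj
  exact (hj.2 ⟨k, hN⟩).trans_lt hk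

lemma eventually_notMem_voronoiCoverage (hx : x ∈ closure (Set.range pts))
    (hxA : x ∉ closure A) :
    ∀ᶠ N in atTop, x ∉ voronoiCoverage Λ (fun i : Fin N => pts i) A := by
  obtain ⟨ε, hε, hball⟩ := Metric.isOpen_iff.1 isClosed_closure.isOpen_compl x hxA
  filter_upwards [eventually_forall_dist_lt_of_mem_voronoiCell (Λ := Λ) hx hε] with N hN hmem
  obtain ⟨j, hjA, hj⟩ := Set.mem_iUnion₂.1 hmem
  exact hball (Metric.mem_ball'.2 (hN j hj)) (subset_closure hjA)

lemma eventually_mem_voronoiCoverage (hpts : ∀ j, pts j ∈ Λ)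
    (hx : x ∈ closure (Set.range pts)) (hxΛ : x ∈ Λ) (hxA : x ∉ closure (Λ \ A)) :
    ∀ᶠ N in atTop, x ∈ voronoiCoverage Λ (fun i : Fin N => pts i) A := by
  obtain ⟨ε, hε, hball⟩ := Metric.isOpen_iff.1 isClosed_closure.isOpen_compl x hxA
  filter_upwards [eventually_forall_dist_lt_of_mem_voronoiCell (Λ := Λ) hx hε,
    eventually_gt_atTop 0] with N hN hNpos
  have : NeZero N := ⟨hNpos.ne'⟩
  obtain ⟨j, hj⟩ := exists_mem_voronoiCell (fun i : Fin N => pts i) hxΛ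
  have hjA : pts j ∈ A := by
    by_contra hjA
    exact hball (Metric.mem_ball'.2 (hN j hj)) (subset_closure ⟨hpts j, hjA⟩)
  exact Set.mem_iUnion₂.2 ⟨j, hjA, hj⟩

lemma eventually_mem_voronoiCoverage_iff (hA : A ⊆ Λ) (hpts : ∀ j, pts j ∈ Λ)
    (hdense : Λ ⊆ closure (Set.range pts)) (hx : x ∉ Λ ∩ closure A ∩ closure (Λ \ A)) :
    ∀ᶠ N in atTop, (x ∈ voronoiCoverage Λ (fun i : Fin N => pts i) A ↔ x ∈ A) := by
  by_cases hxΛ : x ∈ Λ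
  · by_cases hxA : x ∈ closure A
    · have hxA' : x ∉ closure (Λ \ A) := fun h => hx ⟨⟨hxΛ, hxA⟩, h⟩
      have hmemA : x ∈ A := by_contra fun h => hxA' (subset_closure ⟨hxΛ, h⟩)
      filter_upwards [eventually_mem_voronoiCoverage hpts (hdense hxΛ) hxΛ hxA'] with N hN
      exact iff_of_true hN hmemA
    · filter_upwards [eventually_notMem_voronoiCoverage (Λ := Λ) (hdense hxΛ) hxA] with N hN
      exact iff_of_false hN fun h => hxA (subset_closure h)
  · exact Eventually.of_forall fun N =>
      iff_of_false (fun h => hxΛ (voronoiCoverage_subset _ A h)) fun h => hxΛ (hA h)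

theorem tendsto_volume_voronoiCoverage_symmDiff (hΛ : IsCompact Λ) (hA : A ⊆ Λ)
    (hAm : MeasurableSet A) (hbd : volume (Λ ∩ closure A ∩ closure (Λ \ A)) = 0)
    (hpts : ∀ j, pts j ∈ Λ) (hdense : Λ ⊆ closure (Set.range pts)) :
    Tendsto (fun N => volume (voronoiCoverage Λ (fun i : Fin N => pts i) A ∆ A))
      atTop (nhds 0) := by
  have hΛm : MeasurableSet Λ := hΛ.isClosed.measurableSet
  have hae : ∀ᵐ x, ∀ᶠ N in atTop,
      (x ∈ voronoiCoverage Λ (fun i : Fin N => pts i) A ∆ A ↔ x ∈ (∅ : Set (Fin n → ℝ))) := by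
    filter_upwards [measure_eq_zero_iff_ae_notMem.1 hbd] with x hx
    filter_upwards [eventually_mem_voronoiCoverage_iff hA hpts hdense hx] with N hN
    simp [Set.mem_symmDiff, hN]
  simpa using tendsto_measure_of_ae_tendsto_indicator atTop MeasurableSet.empty
    (fun N => (measurableSet_voronoiCoverage hΛm _ A).symmDiff hAm) hΛm hΛ.measure_lt_top.ne
    (Eventually.of_forall fun N =>
      symmDiff_le_sup.trans (Set.union_subset (voronoiCoverage_subset _ A) hA)) hae

end Voronoi

namespace ProbabilityTheory

variable {Ω α : Type*} [MeasurableSpace Ω] {P : Measure Ω} {X : ℕ → Ω → α}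

lemma ae_subset_closure_range [TopologicalSpace α] [SecondCountableTopology α] {Λ : Set α}
    (h : ∀ U, IsOpen U → (U ∩ Λ).Nonempty → ∀ᵐ ω ∂P, ∃ j, X j ω ∈ U) :
    ∀ᵐ ω ∂P, Λ ⊆ closure (Set.range fun j => X j ω) := by
  have hbasis : ∀ᵐ ω ∂P, ∀ U ∈ TopologicalSpace.countableBasis α,
      (U ∩ Λ).Nonempty → ∃ j, X j ω ∈ U := by
    refine (ae_ball_iff (TopologicalSpace.countable_countableBasis α)).2 fun U hU => ?_
    by_cases hne : (U ∩ Λ).Nonempty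
    · exact (h U (TopologicalSpace.isOpen_of_mem_countableBasis hU) hne).mono fun _ hω _ => hω
    · exact Eventually.of_forall fun _ h => absurd h hne
  filter_upwards [hbasis] with ω hω x hx
  refine (TopologicalSpace.isBasis_countableBasis α).mem_closure_iff.2 fun U hU hxU => ?_
  obtain ⟨j, hj⟩ := hω U hU ⟨x, hxU, hx⟩
  exact ⟨X j ω, hj, j, rfl⟩

variable [MeasurableSpace α] {μ : Measure α}

lemma iIndepFun.measure_forall_mem_eq_zero (hX : ∀ j, Measurable (X j)) (hindep : iIndepFun X P)
    (hlaw : ∀ j, P.map (X j) = μ) {s : Set α} (hs : MeasurableSet s) (hμs : μ s < 1) :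
    P {ω | ∀ j, X j ω ∈ s} = 0 := by
  have hbound : ∀ N : ℕ, P {ω | ∀ j, X j ω ∈ s} ≤ μ s ^ N := fun N =>
    calc P {ω | ∀ j, X j ω ∈ s}
        ≤ P (⋂ j ∈ Finset.range N, X j ⁻¹' s) :=
          measure_mono fun ω hω => Set.mem_iInter₂.2 fun j _ => hω j
      _ = ∏ j ∈ Finset.range N, P (X j ⁻¹' s) :=
          hindep.measure_inter_preimage_eq_mul _ fun _ _ => hs
      _ = μ s ^ N := by
          simp_rw [← Measure.map_apply (hX _) hs, hlaw, Finset.prod_const, Finset.card_range]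
  exact le_antisymm
    (ge_of_tendsto' (ENNReal.tendsto_pow_atTop_nhds_zero_of_lt_one hμs) hbound) bot_le

lemma iIndepFun.ae_exists_mem [IsProbabilityMeasure P] (hX : ∀ j, Measurable (X j))
    (hindep : iIndepFun X P) (hlaw : ∀ j, P.map (X j) = μ) {s : Set α} (hs : MeasurableSet s)
    (hμs : μ s ≠ 0) : ∀ᵐ ω ∂P, ∃ j, X j ω ∈ s := by
  have : IsProbabilityMeasure μ := hlaw 0 ▸ Measure.isProbabilityMeasure_map (hX 0).aemeasurable
  have hcompl : μ sᶜ < 1 := by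
    rw [prob_compl_eq_one_sub hs]
    exact ENNReal.sub_lt_self ENNReal.one_ne_top one_ne_zero hμs
  rw [ae_iff]
  simpa using hindep.measure_forall_mem_eq_zero hX hlaw hs.compl hcompl

end ProbabilityTheory

/-- i.i.d. sampling from an a.e. positive density is `ℬ_Λ`-consistent: if `A ⊆ Λ` is Borel
with relative topological boundary of Lebesgue measure zero, then almost surely the volume
of the symmetric difference between `A` and its Voronoi coverage `A_N` tends to `0`. -/
theorem stmt_9 {n : ℕ} (Λ : Set (Fin n → ℝ)) (hΛ : IsCompact Λ)
    (hopen : ∀ U : Set (Fin n → ℝ), IsOpen U → (U ∩ Λ).Nonempty → 0 < volume (U ∩ Λ))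
    {Ω : Type*} [MeasurableSpace Ω] (P : Measure Ω) [IsProbabilityMeasure P]
    (X : ℕ → Ω → (Fin n → ℝ)) (hX : ∀ j, Measurable (X j))
    (hindep : iIndepFun X P)
    (f : (Fin n → ℝ) → ℝ≥0∞) (hf : Measurable f)
    (hlaw : ∀ j, P.map (X j) = (volume.restrict Λ).withDensity f)
    (hfpos : ∀ᵐ x ∂(volume.restrict Λ), 0 < f x)
    (A : Set (Fin n → ℝ)) (hA : A ⊆ Λ) (hAm : MeasurableSet A)
    (hbd : volume (Λ ∩ closure A ∩ closure (Λ \ A)) = 0) :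
    ∀ᵐ ω ∂P, Tendsto
      (fun N => volume ((voronoiCoverage Λ (fun j : Fin N => X j ω) A) ∆ A))
      atTop (nhds 0) := by
  have hΛm : MeasurableSet Λ := hΛ.isClosed.measurableSet
  have hac : volume.restrict Λ ≪ (volume.restrict Λ).withDensity f :=
    withDensity_absolutelyContinuous' hf.aemeasurable (hfpos.mono fun _ h => h.ne')
  have hmem : ∀ᵐ ω ∂P, ∀ j, X j ω ∈ Λ := ae_all_iff.2 fun j =>
    ae_of_ae_map (hX j).aemeasurable <| by
      rw [hlaw j]
      exact (withDensity_absolutelyContinuous _ f).ae_le (ae_restrict_mem hΛm)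
  have hdense : ∀ᵐ ω ∂P, Λ ⊆ closure (Set.range fun j => X j ω) :=
    ae_subset_closure_range fun U hU hne =>
      hindep.ae_exists_mem hX hlaw hU.measurableSet fun h0 => by
        have := hac h0
        rw [Measure.restrict_apply hU.measurableSet] at this
        exact (hopen U hU hne).ne' this
  filter_upwards [hmem, hdense] with ω hωΛ hωdense
  exact tendsto_volume_voronoiCoverage_symmDiff (pts := fun j => X j ω)
    hΛ hA hAm hbd hωΛ hωdense
end
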